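/- arXiv:1409.5451 — 2 statements merged into one kernel-verified Lean document; each statement's English description precedes it below -/
import Mathlib

section
/- Let G be a graph, f an edge of G, and x ∈ ℤ^{E(G)} such that x(C') is even for every circuit C' of G avoiding f. If there exists a circuit C of G containing f with x(C) even, then x(C') is even for every circuit C' of G, i.e., x lies in the lattice generated by the cuts of G. -/
/-!
Reduce modulo 2. A closed walk avoiding `f` has even weight: shortcutting it to a path
(`Walk.bypass`) only removes closed subwalks `u → v ⇝ u` with `v ⇝ u` a path, and such a
subwalk is either a circuit avoiding `f` or an edge traversed twice. Hence any two walks with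
the same ends that avoid `f = s(a, b)` have the same parity. Every circuit through `f` is `f`
followed by a walk from `b` to `a` avoiding `f`, so all circuits through `f` have the parity of
the given one.
-/

namespace SimpleGraph.Walk

variable {V : Type*} {G : SimpleGraph V}

section EdgeSum

variable {M : Type*} [AddCommMonoid M] (y : Sym2 V → M)

def edgeSum {u v : V} (p : G.Walk u v) : M := (p.edges.map y).sum

@[simp]
lemma edgeSum_nil {u : V} : (nil : G.Walk u u).edgeSum y = 0 := rfl

@[simp]
lemma edgeSum_cons {u v w : V} (h : G.Adj u v) (p : G.Walk v w) :
    (cons h p).edgeSum y = y s(u, v) + p.edgeSum y := by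
  simp [edgeSum]

@[simp]
lemma edgeSum_append {u v w : V} (p : G.Walk u v) (q : G.Walk v w) :
    (p.append q).edgeSum y = p.edgeSum y + q.edgeSum y := by
  simp [edgeSum]

@[simp]
lemma edgeSum_reverse {u v : V} (p : G.Walk u v) : p.reverse.edgeSum y = p.edgeSum y := by
  simp [edgeSum, List.sum_reverse]

lemma edgeSum_eq_of_perm {u v u' v' : V} {p : G.Walk u v} {q : G.Walk u' v'}
    (h : p.edges.Perm q.edges) : p.edgeSum y = q.edgeSum y :=
  (h.map y).sum_eq

lemma exists_eq_append_cons_of_mem_darts {u v : V} (p : G.Walk u v) {d : G.Dart}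
    (hd : d ∈ p.darts) :
    ∃ (q : G.Walk u d.fst) (r : G.Walk d.snd v), p = q.append (cons d.adj r) := by
  induction p with
  | nil => simp at hd
  | cons h p ih =>
    rw [darts_cons, List.mem_cons] at hd
    rcases hd with rfl | hd
    · exact ⟨nil, p, rfl⟩
    · obtain ⟨q, r, rfl⟩ := ih hd
      exact ⟨cons h q, r, rfl⟩

lemma IsTrail.exists_edgeSum_eq_add_of_mem_edges {u a b : V} {c : G.Walk u u} (hc : c.IsTrail)
    (hab : s(a, b) ∈ c.edges) :
    ∃ p : G.Walk b a, s(a, b) ∉ p.edges ∧ c.edgeSum y = y s(a, b) + p.edgeSum y := by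
  obtain ⟨⟨⟨a', b'⟩, hadj⟩, hd, hde⟩ := List.mem_map.mp hab
  obtain ⟨q, r, rfl⟩ := exists_eq_append_cons_of_mem_darts c hd
  have hperm : (q.append (cons hadj r)).edges.Perm (cons hadj (r.append q)).edges := by
    simpa [edges_append] using List.perm_middle.trans (List.perm_append_comm.cons _)
  have hfresh : s(a', b') ∉ (r.append q).edges :=
    (List.nodup_cons.mp (hperm.nodup_iff.mp hc.edges_nodup)).1
  have hsum := edgeSum_eq_of_perm y hperm
  rw [edgeSum_cons] at hsum
  rcases Sym2.eq_iff.mp hde with ⟨rfl, rfl⟩ | ⟨rfl, rfl⟩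
  · exact ⟨r.append q, hfresh, hsum⟩
  · refine ⟨(r.append q).reverse, ?_, ?_⟩
    · rwa [edges_reverse, List.mem_reverse, Sym2.eq_swap]
    · rw [edgeSum_reverse, hsum, Sym2.eq_swap]

end EdgeSum

section Parity

variable (y : Sym2 V → ZMod 2) (f : Sym2 V)
  (hcyc : ∀ (u : V) (c : G.Walk u u), c.IsCycle → f ∉ c.edges → c.edgeSum y = 0)
include hcyc

lemma edgeSum_cons_eq_zero_of_isPath {u v : V} (h : G.Adj u v) {t : G.Walk v u} (ht : t.IsPath)
    (hf : f ∉ (cons h t).edges) : (cons h t).edgeSum y = 0 := by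
  by_cases huv : s(u, v) ∈ t.edges
  · rw [Sym2.eq_swap] at huv
    rw [ht.eq_adj_toWalk_of_mem_edges huv]
    simp [Sym2.eq_swap, CharTwo.add_self_eq_zero]
  · exact hcyc u _ ((cons_isCycle_iff t h).mpr ⟨ht, huv⟩) hf

lemma edgeSum_bypass [DecidableEq V] {u v : V} (p : G.Walk u v) (hf : f ∉ p.edges) :
    p.bypass.edgeSum y = p.edgeSum y := by
  induction p with
  | nil => rfl
  | @cons u v w h p ih =>
    rw [edges_cons, List.mem_cons, not_or] at hf
    specialize ih hf.2
    rw [bypass]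
    split_ifs with hs
    · set t := p.bypass.takeUntil u hs
      have ht : f ∉ (cons h t).edges := by
        rw [edges_cons, List.mem_cons, not_or]
        exact ⟨hf.1, fun he => hf.2 (p.edges_bypass_subset_edges
          (p.bypass.edges_takeUntil_subset_edges hs he))⟩
      have hloop := edgeSum_cons_eq_zero_of_isPath y f hcyc h (p.bypass_isPath.takeUntil hs) ht
      have hsplit : p.bypass.edgeSum y = t.edgeSum y + (p.bypass.dropUntil u hs).edgeSum y := by
        rw [← edgeSum_append, p.bypass.take_spec hs]
      rw [edgeSum_cons, ← ih, hsplit, ← add_assoc, ← edgeSum_cons y h, hloop, zero_add]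
    · rw [edgeSum_cons, edgeSum_cons, ih]

lemma edgeSum_eq_zero_of_notMem_edges {u : V} (c : G.Walk u u) (hf : f ∉ c.edges) :
    c.edgeSum y = 0 := by
  classical
  rw [← edgeSum_bypass y f hcyc c hf, (isPath_iff_nil.mp c.bypass_isPath).eq_nil, edgeSum_nil]

lemma edgeSum_eq_of_notMem_edges {u v : V} {p q : G.Walk u v} (hp : f ∉ p.edges)
    (hq : f ∉ q.edges) : p.edgeSum y = q.edgeSum y := by
  have hpq : f ∉ (p.append q.reverse).edges := by
    simp [edges_append, edges_reverse, hp, hq]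
  have := edgeSum_eq_zero_of_notMem_edges y f hcyc _ hpq
  rwa [edgeSum_append, edgeSum_reverse, CharTwo.add_eq_zero] at this

end Parity

lemma IsTrail.even_sum_iff_edgeSum_eq_zero [DecidableEq (Sym2 V)] {u v : V} {p : G.Walk u v}
    (hp : p.IsTrail) (x : Sym2 V → ℤ) :
    Even (∑ e ∈ p.edges.toFinset, x e) ↔ p.edgeSum (fun e => (x e : ZMod 2)) = 0 := by
  rw [← ZMod.intCast_eq_zero_iff_even, List.sum_toFinset _ hp.edges_nodup, Int.cast_list_sum,
    List.map_map]
  rfl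

end SimpleGraph.Walk

open SimpleGraph Walk

open scoped Classical

theorem even_on_all_circuits_general {V : Type*} (G : SimpleGraph V)
    (f : Sym2 V) (x : Sym2 V → ℤ)
    (havoid : ∀ (u : V) (w : G.Walk u u), w.IsCycle → f ∉ w.edges →
      Even (∑ e ∈ w.edges.toFinset, x e))
    (hthrough : ∃ (u : V) (w : G.Walk u u), w.IsCycle ∧ f ∈ w.edges ∧
      Even (∑ e ∈ w.edges.toFinset, x e)) :
    ∀ (u : V) (w : G.Walk u u), w.IsCycle → Even (∑ e ∈ w.edges.toFinset, x e) := by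
  obtain ⟨a, b⟩ := f
  intro u w hw
  obtain hfw | hfw := em' (s(a, b) ∈ w.edges)
  · exact havoid u w hw hfw
  obtain ⟨u₀, C, hC, hfC, hCeven⟩ := hthrough
  set y : Sym2 V → ZMod 2 := fun e => (x e : ZMod 2)
  have hcyc : ∀ (u : V) (c : G.Walk u u), c.IsCycle → s(a, b) ∉ c.edges → c.edgeSum y = 0 :=
    fun u c hc hfc => (hc.isTrail.even_sum_iff_edgeSum_eq_zero x).mp (havoid u c hc hfc)
  rw [hw.isTrail.even_sum_iff_edgeSum_eq_zero]
  rw [hC.isTrail.even_sum_iff_edgeSum_eq_zero] at hCeven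
  obtain ⟨p, hpf, hp⟩ := hw.isTrail.exists_edgeSum_eq_add_of_mem_edges y hfw
  obtain ⟨q, hqf, hq⟩ := hC.isTrail.exists_edgeSum_eq_add_of_mem_edges y hfC
  rw [hp, edgeSum_eq_of_notMem_edges y _ hcyc hpf hqf, ← hq, hCeven]

/-- Let `G` be a simple graph, `f` an edge of `G`, and `x` an integer
edge-weighting such that `x(C')` is even for every circuit `C'` of `G` avoiding `f`.
If some circuit `C` of `G` contains `f` and has `x(C)` even, then `x(C')` is even for
every circuit `C'` of `G` (equivalently, `x` lies in the lattice generated by the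
cuts of `G`). -/
theorem even_on_all_circuits {V : Type*} [Fintype V] (G : SimpleGraph V)
    (f : Sym2 V) (hf : f ∈ G.edgeSet) (x : Sym2 V → ℤ)
    (havoid : ∀ (u : V) (w : G.Walk u u), w.IsCycle → f ∉ w.edges →
      Even (∑ e ∈ w.edges.toFinset, x e))
    (hthrough : ∃ (u : V) (w : G.Walk u u), w.IsCycle ∧ f ∈ w.edges ∧
      Even (∑ e ∈ w.edges.toFinset, x e)) :
    ∀ (u : V) (w : G.Walk u u), w.IsCycle → Even (∑ e ∈ w.edges.toFinset, x e) :=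
  even_on_all_circuits_general G f x havoid hthrough
end

section
/- In K6 minus the edge {5,6}, each of the seven cuts δ(S) for S ∈ {{1,4},{2,4},{3,4},{1,4,6},{2,4,6},{3,4,6},{6}} has cardinality 4 or 8; hence any nonnegative integer combination of these cuts has total edge-weight divisible by 4. -/
open scoped Classical

/-- `e` is an edge crossing the vertex set `S` (exactly one endpoint in `S`). -/
def InCut {V : Type*} (S : Set V) (e : Sym2 V) : Prop :=
  ∃ i j, e = s(i, j) ∧ i ∈ S ∧ j ∉ S

/-- The cut of `G` generated by a vertex set `S`, as a set of edges. -/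
def cutSet {V : Type*} (G : SimpleGraph V) (S : Set V) : Set (Sym2 V) :=
  {e | e ∈ G.edgeSet ∧ InCut S e}

/-- The integer cut vector `δ(S)` of a graph `G`. -/
noncomputable def cutVecZ {V : Type*} (G : SimpleGraph V) (S : Set V) : Sym2 V → ℤ :=
  fun e => if e ∈ G.edgeSet ∧ InCut S e then 1 else 0

/-- `K₆ − e`: the complete graph on `Fin 6` (vertices `0,…,5` standing for `1,…,6`)
with the edge `{4,5}` (i.e. `{5,6}` in 1-indexed notation) removed. -/
noncomputable def K6e : SimpleGraph (Fin 6) :=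
  (⊤ : SimpleGraph (Fin 6)).deleteEdges {s((4 : Fin 6), (5 : Fin 6))}

/-- The seven vertex sets `{1,4},{2,4},{3,4},{1,4,6},{2,4,6},{3,4,6},{6}` (1-indexed),
written 0-indexed. -/
noncomputable def sevenSets : Fin 7 → Set (Fin 6) :=
  ![{0, 3}, {1, 3}, {2, 3}, {0, 3, 5}, {1, 3, 5}, {2, 3, 5}, {5}]

/-! In a complete graph the cut `δ(S)` consists of the `|S| · |V ∖ S|` pairs `s(a, b)` with
`a ∈ S`, `b ∉ S`; deleting one edge lowers this count by one exactly when that edge crosses `S`.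
For the seven sets this gives `2 · 4 = 8`, `3 · 3 - 1 = 8` and `1 · 5 - 1 = 4`, and the total
weight of `∑ cᵢ δ(Sᵢ)` is `∑ cᵢ |δ(Sᵢ)|`. -/

section

variable {V : Type*}

theorem inCut_mk_iff (S : Set V) (a b : V) :
    InCut S s(a, b) ↔ (a ∈ S ∧ b ∉ S) ∨ (b ∈ S ∧ a ∉ S) := by
  constructor
  · rintro ⟨i, j, he, hi, hj⟩
    rcases Sym2.eq_iff.1 he with ⟨rfl, rfl⟩ | ⟨rfl, rfl⟩
    exacts [Or.inl ⟨hi, hj⟩, Or.inr ⟨hi, hj⟩]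
  · rintro (⟨ha, hb⟩ | ⟨hb, ha⟩)
    exacts [⟨a, b, rfl, ha, hb⟩, ⟨b, a, Sym2.eq_swap, hb, ha⟩]

theorem cutSet_deleteEdges (G : SimpleGraph V) (S : Set V) (s : Set (Sym2 V)) :
    cutSet (G.deleteEdges s) S = cutSet G S \ s := by
  ext e
  simp only [cutSet, SimpleGraph.edgeSet_deleteEdges, Set.mem_sdiff, Set.mem_ofPred_eq]
  tauto

theorem mem_cutSet_top_iff (S : Set V) (e : Sym2 V) : e ∈ cutSet ⊤ S ↔ InCut S e := by
  refine ⟨And.right, fun h => ⟨?_, h⟩⟩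
  obtain ⟨a, b, rfl, ha, hb⟩ := h
  exact (SimpleGraph.top_adj a b).2 (ne_of_mem_of_not_mem ha hb)

theorem cutSet_top (S : Set V) :
    cutSet ⊤ S = (fun p : V × V => s(p.1, p.2)) '' (S ×ˢ Sᶜ) := by
  ext e
  rw [mem_cutSet_top_iff]
  constructor
  · rintro ⟨a, b, rfl, ha, hb⟩
    exact ⟨(a, b), ⟨ha, hb⟩, rfl⟩
  · rintro ⟨⟨a, b⟩, ⟨ha, hb⟩, rfl⟩
    exact ⟨a, b, rfl, ha, hb⟩

theorem ncard_cutSet_top [Finite V] (S : Set V) :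
    (cutSet ⊤ S).ncard = S.ncard * Sᶜ.ncard := by
  rw [cutSet_top, Set.InjOn.ncard_image, Set.ncard_prod]
  rintro ⟨a, b⟩ ⟨ha, -⟩ ⟨a', b'⟩ ⟨-, hb'⟩ h
  rcases Sym2.eq_iff.1 h with ⟨rfl, rfl⟩ | ⟨rfl, rfl⟩
  · rfl
  · exact absurd ha hb'

theorem ncard_cutSet_top_deleteEdges_singleton [Finite V] (S : Set V) (e : Sym2 V) :
    (cutSet ((⊤ : SimpleGraph V).deleteEdges {e}) S).ncard =
      S.ncard * Sᶜ.ncard - if InCut S e then 1 else 0 := by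
  rw [cutSet_deleteEdges, ← ncard_cutSet_top]
  split_ifs with h
  · exact Set.ncard_sdiff_singleton_of_mem ((mem_cutSet_top_iff S e).2 h)
  · rw [Nat.sub_zero, Set.sdiff_singleton_eq_self ((mem_cutSet_top_iff S e).not.2 h)]

theorem sum_cutVecZ [Fintype V] (G : SimpleGraph V) (S : Set V) :
    ∑ e : Sym2 V, cutVecZ G S e = (cutSet G S).ncard := by
  simp only [cutVecZ, Finset.sum_boole, Nat.cast_inj]
  rw [← Set.ncard_coe_finset]
  congr
  ext e
  simp [cutSet]

theorem dvd_sum_sum_mul_cutVecZ [Fintype V] {ι : Type*} [Fintype ι] (G : SimpleGraph V)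
    (S : ι → Set V) (d : ℤ) (hd : ∀ i, d ∣ (cutSet G (S i)).ncard) (c : ι → ℤ) :
    d ∣ ∑ e : Sym2 V, ∑ i, c i * cutVecZ G (S i) e := by
  rw [Finset.sum_comm]
  refine Finset.dvd_sum fun i _ => ?_
  rw [← Finset.mul_sum, sum_cutVecZ]
  exact (hd i).mul_left _

end

/-- In `K₆ − e`, each of the seven cuts `δ(S)` has cardinality 4 or 8;
hence any nonnegative integer combination of these seven cuts has total edge-weight
divisible by 4. -/
theorem sevenCuts_card_and_divisibility :
    (∀ i : Fin 7, (cutSet K6e (sevenSets i)).ncard = 4 ∨ (cutSet K6e (sevenSets i)).ncard = 8)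
      ∧ ∀ c : Fin 7 → ℕ,
        (4 : ℤ) ∣ ∑ e : Sym2 (Fin 6), ∑ i : Fin 7, (c i : ℤ) * cutVecZ K6e (sevenSets i) e := by
  have hcard (i : Fin 7) :
      (cutSet K6e (sevenSets i)).ncard = 4 ∨ (cutSet K6e (sevenSets i)).ncard = 8 := by
    rw [K6e, ncard_cutSet_top_deleteEdges_singleton, Set.ncard_compl]
    fin_cases i <;> simp [sevenSets, inCut_mk_iff]
  refine ⟨hcard, fun c => dvd_sum_sum_mul_cutVecZ _ _ 4 (fun i => ?_) _⟩
  rcases hcard i with h | h <;> rw [h] <;> norm_num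
end
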